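/- arXiv:math/9903089 — 4 statements merged into one kernel-verified Lean document; each statement's English description precedes it below -/
import Mathlib

section
/- Suppose x ∈ ℝⁿ is a metric regular point of d, i.e. for every u ∈ ℝⁿ and every τ ∈ ℝ one has ρ̲(x, u) = ρ̄(x, u) and ρ̄(x, τ·u) = |τ| · ρ̄(x, u). Then for all v, w ∈ ℝⁿ: limsup_{t→0⁺} sup{ d(y + t·v, y + t·w)/t : y ∈ B̄(x, t) } = ρ̄(x, w − v). -/
/-!
Put `u = w - v` and `c = 1 + ‖v‖`. The translation `y ↦ y + t v` maps `B̄(x, t)` into `B̄(x, c t)`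
and turns `d(y + t v, y + t w) / t` into `d(z, z + t u) / t`, so the quantity in question is squeezed
between the infimum and the supremum of these quotients over `B̄(x, c t)`. Substituting `s = c t`,
those have liminf `c ρ̲(x, c⁻¹ u)` and limsup `c ρ̄(x, c⁻¹ u)`, and at a metric regular point both
equal `ρ̄(x, u)`.
-/

open Filter Metric Set

/-- Lower derivate of a distance function `d` on `ℝⁿ` at `x` in direction `v`:
`liminf_{t→0⁺} inf { d(y, y + t•v)/t : y ∈ B̄(x,t) }`. -/
noncomputable def lowerDerivate {n : ℕ}
    (d : EuclideanSpace ℝ (Fin n) → EuclideanSpace ℝ (Fin n) → ℝ)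
    (x v : EuclideanSpace ℝ (Fin n)) : ℝ :=
  Filter.liminf
    (fun t : ℝ => sInf ((fun y => d y (y + t • v) / t) '' Metric.closedBall x t))
    (nhdsWithin 0 (Set.Ioi 0))

/-- Upper derivate of a distance function `d` on `ℝⁿ` at `x` in direction `v`:
`limsup_{t→0⁺} sup { d(y, y + t•v)/t : y ∈ B̄(x,t) }`. -/
noncomputable def upperDerivate {n : ℕ}
    (d : EuclideanSpace ℝ (Fin n) → EuclideanSpace ℝ (Fin n) → ℝ)
    (x v : EuclideanSpace ℝ (Fin n)) : ℝ :=
  Filter.limsup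
    (fun t : ℝ => sSup ((fun y => d y (y + t • v) / t) '' Metric.closedBall x t))
    (nhdsWithin 0 (Set.Ioi 0))

open Topology Pointwise

theorem pseudometric_nonneg {α : Type*} {d : α → α → ℝ}
    (hsymm : ∀ a b, d a b = d b a) (hdiag : ∀ a, d a a = 0)
    (htri : ∀ a b c, d a c ≤ d a b + d b c) (a b : α) : 0 ≤ d a b := by
  have := htri a b a
  rw [hdiag, hsymm b a] at this
  linarith

theorem sInf_le_sSup_and_sSup_le_sSup_of_subset_Icc {S T : Set ℝ} {a b : ℝ} (hS : S.Nonempty)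
    (hST : S ⊆ T) (hT : T ⊆ Icc a b) : sInf T ≤ sSup S ∧ sSup S ≤ sSup T := by
  obtain ⟨s, hs⟩ := hS
  have hT_above : BddAbove T := bddAbove_Icc.mono hT
  exact ⟨(csInf_le (bddBelow_Icc.mono hT) (hST hs)).trans (le_csSup (hT_above.mono hST) hs),
    csSup_le_csSup hT_above ⟨s, hs⟩ hST⟩

section Limits

variable {ι : Type*} {F : Filter ι} {c : ℝ}

theorem Real.limsup_const_mul_of_pos (hc : 0 < c) (f : ι → ℝ) :
    limsup (fun i => c * f i) F = c * limsup f F := by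
  simp only [limsup_eq]
  rw [← smul_eq_mul c, ← Real.sInf_smul_of_nonneg hc.le]
  congr 1
  ext a
  simp [Set.mem_smul_set_iff_inv_smul_mem₀ hc.ne', le_inv_mul_iff₀ hc]

theorem Real.liminf_const_mul_of_pos (hc : 0 < c) (f : ι → ℝ) :
    liminf (fun i => c * f i) F = c * liminf f F := by
  simp only [liminf_eq]
  rw [← smul_eq_mul c, ← Real.sSup_smul_of_nonneg hc.le]
  congr 1
  ext a
  simp [Set.mem_smul_set_iff_inv_smul_mem₀ hc.ne', inv_mul_le_iff₀ hc]

theorem limsup_eq_of_squeeze [F.NeBot] {f g h : ι → ℝ} {ℓ : ℝ}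
    (hhf : ∀ᶠ i in F, h i ≤ f i) (hfg : ∀ᶠ i in F, f i ≤ g i)
    (hh : IsBoundedUnder (· ≥ ·) F h) (hg : IsBoundedUnder (· ≤ ·) F g)
    (hh_lim : liminf h F = ℓ) (hg_lim : limsup g F = ℓ) : limsup f F = ℓ := by
  have hf_above : IsBoundedUnder (· ≤ ·) F f := hg.mono_le hfg
  have hf_below : IsBoundedUnder (· ≥ ·) F f := hh.mono_ge hhf
  refine le_antisymm (hg_lim ▸ limsup_le_limsup hfg hf_below.isCoboundedUnder_le hg) ?_
  calc ℓ = liminf h F := hh_lim.symm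
    _ ≤ liminf f F := liminf_le_liminf hhf hh hf_above.isCoboundedUnder_ge
    _ ≤ limsup f F := liminf_le_limsup hf_above hf_below

theorem map_mul_left_nhdsGT_zero (hc : 0 < c) : map (c * ·) (𝓝[>] (0 : ℝ)) = 𝓝[>] 0 := by
  conv_lhs => rw [← comap_mulLeft_nhdsGT_zero hc]
  exact map_comap_of_surjective (Equiv.mulLeft₀ c hc.ne').surjective _

theorem limsup_const_mul_comp_mul_left_nhdsGT_zero (hc : 0 < c) (φ : ℝ → ℝ) :
    limsup (fun t => c * φ (c * t)) (𝓝[>] 0) = c * limsup φ (𝓝[>] 0) := by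
  rw [Real.limsup_const_mul_of_pos hc]
  exact congrArg (c * ·) ((limsup_comp φ (c * ·) _).trans (by rw [map_mul_left_nhdsGT_zero hc]))

theorem liminf_const_mul_comp_mul_left_nhdsGT_zero (hc : 0 < c) (φ : ℝ → ℝ) :
    liminf (fun t => c * φ (c * t)) (𝓝[>] 0) = c * liminf φ (𝓝[>] 0) := by
  rw [Real.liminf_const_mul_of_pos hc]
  exact congrArg (c * ·) ((liminf_comp φ (c * ·) _).trans (by rw [map_mul_left_nhdsGT_zero hc]))

end Limits

section DiffQuot

variable {E : Type*} [SeminormedAddCommGroup E] [NormedSpace ℝ E] {d : E → E → ℝ} {x u : E}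
  {t r : ℝ}

def diffQuotSet (d : E → E → ℝ) (x u : E) (t r : ℝ) : Set ℝ :=
  (fun z => d z (z + t • u) / t) '' closedBall x r

theorem diffQuotSet_subset_Icc {L : ℝ} (hd0 : ∀ a b, 0 ≤ d a b)
    (hLip : ∀ a b, d a b ≤ L * ‖a - b‖) (ht : 0 < t) :
    diffQuotSet d x u t r ⊆ Icc 0 (L * ‖u‖) := by
  rintro _ ⟨z, -, rfl⟩
  refine ⟨div_nonneg (hd0 _ _) ht.le, ?_⟩
  rw [div_le_iff₀ ht]
  calc d z (z + t • u) ≤ L * ‖z - (z + t • u)‖ := hLip _ _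
    _ = L * ‖u‖ * t := by
      rw [sub_add_cancel_left, norm_neg, norm_smul, Real.norm_of_nonneg ht.le]; ring

theorem diffQuotSet_eq_smul {c : ℝ} (hc : 0 < c) :
    diffQuotSet d x u t r = c • diffQuotSet d x (c⁻¹ • u) (c * t) r := by
  rw [diffQuotSet, diffQuotSet, ← Set.image_smul, Set.image_image]
  refine Set.image_congr fun z _ => ?_
  rw [smul_smul, mul_right_comm, mul_inv_cancel₀ hc.ne', one_mul, smul_eq_mul, mul_div_assoc',
    mul_div_mul_left _ _ hc.ne']

theorem image_translate_subset_diffQuotSet (v w : E) (ht : 0 ≤ t) :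
    (fun y => d (y + t • v) (y + t • w) / t) '' closedBall x t ⊆
      diffQuotSet d x (w - v) t ((1 + ‖v‖) * t) := by
  rintro _ ⟨y, hy, rfl⟩
  refine ⟨y + t • v, ?_, by simp only [smul_sub, add_add_sub_cancel]⟩
  rw [mem_closedBall] at hy ⊢
  calc dist (y + t • v) x ≤ dist (y + t • v) y + dist y x := dist_triangle _ _ _
    _ ≤ t * ‖v‖ + t := by
      rw [dist_self_add_left, norm_smul, Real.norm_of_nonneg ht]; linarith
    _ = (1 + ‖v‖) * t := by ring

end DiffQuot

section Derivates

variable {n : ℕ} {d : EuclideanSpace ℝ (Fin n) → EuclideanSpace ℝ (Fin n) → ℝ}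
  {x u : EuclideanSpace ℝ (Fin n)} {c : ℝ}

theorem limsup_sSup_diffQuotSet_mul (hc : 0 < c) :
    limsup (fun t => sSup (diffQuotSet d x u t (c * t))) (𝓝[>] 0) =
      c * upperDerivate d x (c⁻¹ • u) := by
  have hscale : ∀ t, sSup (diffQuotSet d x u t (c * t)) =
      c * sSup (diffQuotSet d x (c⁻¹ • u) (c * t) (c * t)) := fun t => by
    rw [diffQuotSet_eq_smul hc, Real.sSup_smul_of_nonneg hc.le, smul_eq_mul]
  simp only [hscale]
  exact limsup_const_mul_comp_mul_left_nhdsGT_zero hc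
    fun s => sSup (diffQuotSet d x (c⁻¹ • u) s s)

theorem liminf_sInf_diffQuotSet_mul (hc : 0 < c) :
    liminf (fun t => sInf (diffQuotSet d x u t (c * t))) (𝓝[>] 0) =
      c * lowerDerivate d x (c⁻¹ • u) := by
  have hscale : ∀ t, sInf (diffQuotSet d x u t (c * t)) =
      c * sInf (diffQuotSet d x (c⁻¹ • u) (c * t) (c * t)) := fun t => by
    rw [diffQuotSet_eq_smul hc, Real.sInf_smul_of_nonneg hc.le, smul_eq_mul]
  simp only [hscale]
  exact liminf_const_mul_comp_mul_left_nhdsGT_zero hc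
    fun s => sInf (diffQuotSet d x (c⁻¹ • u) s s)

end Derivates

theorem limsup_eq_upperDerivate_of_metric_regular_general
    {n : ℕ} (L : ℝ)
    (d : EuclideanSpace ℝ (Fin n) → EuclideanSpace ℝ (Fin n) → ℝ)
    (hsymm : ∀ a b, d a b = d b a)
    (hdiag : ∀ a, d a a = 0)
    (htri : ∀ a b c, d a c ≤ d a b + d b c)
    (hLip : ∀ a b, d a b ≤ L * ‖a - b‖)
    (x : EuclideanSpace ℝ (Fin n))
    (hreg : ∀ (u : EuclideanSpace ℝ (Fin n)) (τ : ℝ),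
      lowerDerivate d x u = upperDerivate d x u ∧
        upperDerivate d x (τ • u) = |τ| * upperDerivate d x u) :
    ∀ v w : EuclideanSpace ℝ (Fin n),
      Filter.limsup
          (fun t : ℝ =>
            sSup ((fun y => d (y + t • v) (y + t • w) / t) '' Metric.closedBall x t))
          (nhdsWithin 0 (Set.Ioi 0)) = upperDerivate d x (w - v) := by
  intro v w
  have hd0 := pseudometric_nonneg hsymm hdiag htri
  set c := 1 + ‖v‖
  have hc : 0 < c := by positivity
  have hρ : c * upperDerivate d x (c⁻¹ • (w - v)) = upperDerivate d x (w - v) := by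
    simpa [smul_inv_smul₀ hc.ne', abs_of_pos hc] using ((hreg (c⁻¹ • (w - v)) c).2).symm
  have hsandwich : ∀ᶠ t in 𝓝[>] 0,
      sInf (diffQuotSet d x (w - v) t (c * t)) ≤
          sSup ((fun y => d (y + t • v) (y + t • w) / t) '' closedBall x t) ∧
        sSup ((fun y => d (y + t • v) (y + t • w) / t) '' closedBall x t) ≤
          sSup (diffQuotSet d x (w - v) t (c * t)) :=
    eventually_mem_nhdsWithin.mono fun t (ht : 0 < t) =>
      sInf_le_sSup_and_sSup_le_sSup_of_subset_Icc ((nonempty_closedBall.2 ht.le).image _)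
        (image_translate_subset_diffQuotSet v w ht.le) (diffQuotSet_subset_Icc hd0 hLip ht)
  refine limsup_eq_of_squeeze (hsandwich.mono fun _ => And.left)
    (hsandwich.mono fun _ => And.right) ⟨0, eventually_mem_nhdsWithin.mono fun t ht => ?_⟩
    ⟨L * ‖w - v‖, eventually_mem_nhdsWithin.mono fun t ht => ?_⟩ ?_ ?_
  · exact Real.sInf_nonneg fun _ h => (diffQuotSet_subset_Icc hd0 hLip ht h).1
  · exact csSup_le ((nonempty_closedBall.2 (mul_pos hc ht).le).image _)
      fun _ h => (diffQuotSet_subset_Icc hd0 hLip ht h).2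
  · rw [liminf_sInf_diffQuotSet_mul hc, (hreg _ 1).1, hρ]
  · rw [limsup_sSup_diffQuotSet_mul hc, hρ]

/-- If `x` is a metric regular point of the pseudometric `d`
(lower and upper derivates agree at `x` and are absolutely homogeneous there),
then for all `v, w ∈ ℝⁿ`,
`limsup_{t→0⁺} sup { d(y + t•v, y + t•w)/t : y ∈ B̄(x,t) } = ρ̄(x, w − v)`. -/
theorem limsup_eq_upperDerivate_of_metric_regular
    {n : ℕ} (L : ℝ) (hL : 0 < L)
    (d : EuclideanSpace ℝ (Fin n) → EuclideanSpace ℝ (Fin n) → ℝ)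
    (hsymm : ∀ a b, d a b = d b a)
    (hdiag : ∀ a, d a a = 0)
    (htri : ∀ a b c, d a c ≤ d a b + d b c)
    (hLip : ∀ a b, d a b ≤ L * ‖a - b‖)
    (x : EuclideanSpace ℝ (Fin n))
    (hreg : ∀ (u : EuclideanSpace ℝ (Fin n)) (τ : ℝ),
      lowerDerivate d x u = upperDerivate d x u ∧
        upperDerivate d x (τ • u) = |τ| * upperDerivate d x u) :
    ∀ v w : EuclideanSpace ℝ (Fin n),
      Filter.limsup
          (fun t : ℝ =>
            sSup ((fun y => d (y + t • v) (y + t • w) / t) '' Metric.closedBall x t))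
          (nhdsWithin 0 (Set.Ioi 0)) = upperDerivate d x (w - v) :=
  limsup_eq_upperDerivate_of_metric_regular_general L d hsymm hdiag htri hLip x hreg
end

section
/- The lower derivate ρ̲ : ℝⁿ × ℝⁿ → ℝ and the upper derivate ρ̄ : ℝⁿ × ℝⁿ → ℝ are Borel measurable functions. -/
open Filter Metric Set

/-!
The inner infimum `inf { d(y, y + t•v)/t : y ∈ B̄(x,t) }` is, after the substitution `y = x + z`
with `‖z‖ ≤ t`, an infimum of functions of `(x, v)` that are continuous because `d` is. Hence its
infimum over any set of times `t > 0` is upper semicontinuous in `(x, v)`. The liminf at `0⁺` is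
the supremum of these infima over the countable basis `(0, 1/k)` of `𝓝[>] 0`, everything being
bounded by `L‖v‖` in absolute value, so it is a countable supremum of Borel functions. The upper
derivate is dual.
-/

open Topology

namespace Filter.HasBasis

variable {α ι ι' : Type*} [ConditionallyCompleteLinearOrder α] {v : Filter ι} {p : ι' → Prop}
  {s : ι' → Set ι} [Countable (Subtype p)] [Nonempty (Subtype p)] {f : ι → α}

theorem liminf_eq_ciSup_ciInf_of_forall_bddBelow (hv : v.HasBasis p s)
    (hs : ∀ j : Subtype p, (s j).Nonempty)
    (hf : ∀ j : Subtype p, BddBelow (range fun i : s j => f i)) :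
    liminf f v = ⨆ j : Subtype p, ⨅ i : s j, f i := by
  have hreparam : ∀ j, liminfReparam f s p j = j := fun j => by
    unfold liminfReparam; exact if_pos (hf j)
  rw [hv.liminf_eq_ciSup_ciInf hs ⟨Classical.arbitrary _, hf _⟩]
  exact iSup_congr fun j => by rw [hreparam j]

theorem limsup_eq_ciInf_ciSup_of_forall_bddAbove (hv : v.HasBasis p s)
    (hs : ∀ j : Subtype p, (s j).Nonempty)
    (hf : ∀ j : Subtype p, BddAbove (range fun i : s j => f i)) :
    limsup f v = ⨅ j : Subtype p, ⨆ i : s j, f i :=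
  liminf_eq_ciSup_ciInf_of_forall_bddBelow (α := αᵒᵈ) hv hs hf

end Filter.HasBasis

section Quotients

variable {E : Type*} [SeminormedAddCommGroup E] {d : E → E → ℝ} {L : ℝ}

theorem abs_le_mul_norm_sub_of_triangle (htri : ∀ a b c, d a c ≤ d a b + d b c)
    (hLip : ∀ a b, d a b ≤ L * ‖a - b‖) (a b : E) : |d a b| ≤ L * ‖a - b‖ := by
  have hba := hLip b a
  rw [norm_sub_rev] at hba
  exact abs_le.2 ⟨by linarith [htri a a a, htri a b a], hLip a b⟩

theorem continuous_of_triangle (hL : 0 ≤ L) (htri : ∀ a b c, d a c ≤ d a b + d b c)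
    (hLip : ∀ a b, d a b ≤ L * ‖a - b‖) : Continuous fun q : E × E => d q.1 q.2 := by
  have hsub (a b a' b' : E) : d a b - d a' b' ≤ L * (‖a - a'‖ + ‖b - b'‖) := by
    have hb := hLip b' b
    rw [norm_sub_rev] at hb
    linarith [htri a a' b, htri a' b' b, hLip a a']
  refine (LipschitzWith.of_dist_le' (K := 2 * L) fun q q' => ?_).continuous
  have h₁ : ‖q.1 - q'.1‖ ≤ dist q q' := (norm_fst_le (q - q')).trans_eq (dist_eq_norm q q').symm
  have h₂ : ‖q.2 - q'.2‖ ≤ dist q q' := (norm_snd_le (q - q')).trans_eq (dist_eq_norm q q').symm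
  calc dist (d q.1 q.2) (d q'.1 q'.2) ≤ L * (‖q.1 - q'.1‖ + ‖q.2 - q'.2‖) := by
        rw [Real.dist_eq, abs_sub_le_iff]
        refine ⟨hsub _ _ _ _, ?_⟩
        rw [norm_sub_rev q.1, norm_sub_rev q.2]
        exact hsub _ _ _ _
    _ ≤ L * (dist q q' + dist q q') := by gcongr
    _ = 2 * L * dist q q' := by ring

variable [NormedSpace ℝ E]

def ballQuotients (d : E → E → ℝ) (x v : E) (t : ℝ) : Set ℝ :=
  (fun y => d y (y + t • v) / t) '' closedBall x t

variable {x v : E} {t : ℝ}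

theorem ballQuotients_nonempty (ht : 0 ≤ t) : (ballQuotients d x v t).Nonempty :=
  (nonempty_closedBall.2 ht).image _

theorem ballQuotients_subset_Icc (hbound : ∀ a b, |d a b| ≤ L * ‖a - b‖) (ht : 0 < t) :
    ballQuotients d x v t ⊆ Icc (-(L * ‖v‖)) (L * ‖v‖) := by
  rintro _ ⟨y, -, rfl⟩
  rw [mem_Icc, ← abs_le, abs_div, abs_of_pos ht, div_le_iff₀ ht]
  calc |d y (y + t • v)| ≤ L * ‖y - (y + t • v)‖ := hbound _ _
    _ = L * ‖v‖ * t := by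
      rw [sub_add_cancel_left, norm_neg, norm_smul, Real.norm_of_nonneg ht.le]; ring

theorem neg_le_sInf_ballQuotients (hbound : ∀ a b, |d a b| ≤ L * ‖a - b‖) (ht : 0 < t) :
    -(L * ‖v‖) ≤ sInf (ballQuotients d x v t) :=
  le_csInf (ballQuotients_nonempty ht.le) fun _ hr => (ballQuotients_subset_Icc hbound ht hr).1

theorem sSup_ballQuotients_le (hbound : ∀ a b, |d a b| ≤ L * ‖a - b‖) (ht : 0 < t) :
    sSup (ballQuotients d x v t) ≤ L * ‖v‖ :=
  csSup_le (ballQuotients_nonempty ht.le) fun _ hr => (ballQuotients_subset_Icc hbound ht hr).2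

theorem mem_ballQuotients_shift {z : E} (hz : ‖z‖ ≤ t) :
    d (x + z) (x + z + t • v) / t ∈ ballQuotients d x v t :=
  ⟨x + z, by rwa [mem_closedBall, dist_eq_norm, add_sub_cancel_left], rfl⟩

theorem continuous_shifted_quotient (hd : Continuous fun q : E × E => d q.1 q.2) (z : E) (t : ℝ) :
    Continuous fun p : E × E => d (p.1 + z) (p.1 + z + t • p.2) / t :=
  (hd.comp (f := fun p : E × E => (p.1 + z, p.1 + z + t • p.2)) (by fun_prop)).div_const t

variable {S : Set ℝ}

theorem upperSemicontinuous_iInf_sInf_ballQuotients (hd : Continuous fun q : E × E => d q.1 q.2)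
    (hbound : ∀ a b, |d a b| ≤ L * ‖a - b‖) (hS : S ⊆ Ioi 0) (hne : S.Nonempty) :
    UpperSemicontinuous fun p : E × E => ⨅ t : S, sInf (ballQuotients d p.1 p.2 t) := by
  have := hne.to_subtype
  intro p c hc
  obtain ⟨t, ht⟩ := exists_lt_of_ciInf_lt hc
  obtain ⟨_, ⟨y, hy, rfl⟩, hyc⟩ := exists_lt_of_csInf_lt (ballQuotients_nonempty (hS t.2).le) ht
  have hz : ‖y - p.1‖ ≤ t := by rwa [← dist_eq_norm]
  filter_upwards [(continuous_shifted_quotient hd (y - p.1) t).isOpen_preimage _ isOpen_Iio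
    |>.mem_nhds (by simpa using hyc)] with p' hp'
  have hbdd : BddBelow (range fun t : S => sInf (ballQuotients d p'.1 p'.2 t)) :=
    ⟨-(L * ‖p'.2‖), forall_mem_range.2 fun t => neg_le_sInf_ballQuotients hbound (hS t.2)⟩
  calc ⨅ t : S, sInf (ballQuotients d p'.1 p'.2 t)
      ≤ sInf (ballQuotients d p'.1 p'.2 t) := ciInf_le hbdd t
    _ ≤ d (p'.1 + (y - p.1)) (p'.1 + (y - p.1) + (t : ℝ) • p'.2) / t :=
      csInf_le (bddBelow_Icc.mono (ballQuotients_subset_Icc hbound (hS t.2)))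
        (mem_ballQuotients_shift hz)
    _ < c := hp'

theorem lowerSemicontinuous_iSup_sSup_ballQuotients (hd : Continuous fun q : E × E => d q.1 q.2)
    (hbound : ∀ a b, |d a b| ≤ L * ‖a - b‖) (hS : S ⊆ Ioi 0) (hne : S.Nonempty) :
    LowerSemicontinuous fun p : E × E => ⨆ t : S, sSup (ballQuotients d p.1 p.2 t) := by
  have := hne.to_subtype
  intro p c hc
  obtain ⟨t, ht⟩ := exists_lt_of_lt_ciSup hc
  obtain ⟨_, ⟨y, hy, rfl⟩, hyc⟩ := exists_lt_of_lt_csSup (ballQuotients_nonempty (hS t.2).le) ht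
  have hz : ‖y - p.1‖ ≤ t := by rwa [← dist_eq_norm]
  filter_upwards [(continuous_shifted_quotient hd (y - p.1) t).isOpen_preimage _ isOpen_Ioi
    |>.mem_nhds (by simpa using hyc)] with p' hp'
  have hbdd : BddAbove (range fun t : S => sSup (ballQuotients d p'.1 p'.2 t)) :=
    ⟨L * ‖p'.2‖, forall_mem_range.2 fun t => sSup_ballQuotients_le hbound (hS t.2)⟩
  calc c < d (p'.1 + (y - p.1)) (p'.1 + (y - p.1) + (t : ℝ) • p'.2) / t := hp'
    _ ≤ sSup (ballQuotients d p'.1 p'.2 t) :=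
      le_csSup (bddAbove_Icc.mono (ballQuotients_subset_Icc hbound (hS t.2)))
        (mem_ballQuotients_shift hz)
    _ ≤ ⨆ t : S, sSup (ballQuotients d p'.1 p'.2 t) := le_ciSup hbdd t

end Quotients

section Derivates

variable {n : ℕ} {d : EuclideanSpace ℝ (Fin n) → EuclideanSpace ℝ (Fin n) → ℝ} {L : ℝ}
  {ι : Type*} {p : ι → Prop} {s : ι → Set ℝ} [Countable (Subtype p)]

theorem lowerDerivate_eq_ciSup_ciInf (hbound : ∀ a b, |d a b| ≤ L * ‖a - b‖)
    (hv : (𝓝[>] (0 : ℝ)).HasBasis p s) (hs : ∀ j, s j ⊆ Ioi 0) (x v : EuclideanSpace ℝ (Fin n)) :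
    lowerDerivate d x v = ⨆ j : Subtype p, ⨅ t : s j, sInf (ballQuotients d x v t) := by
  obtain ⟨j₀, hj₀⟩ := hv.ex_mem
  have : Nonempty (Subtype p) := ⟨⟨j₀, hj₀⟩⟩
  exact hv.liminf_eq_ciSup_ciInf_of_forall_bddBelow (fun j => nonempty_of_mem (hv.mem_of_mem j.2))
    fun j => ⟨-(L * ‖v‖), forall_mem_range.2 fun t => neg_le_sInf_ballQuotients hbound (hs j t.2)⟩

theorem upperDerivate_eq_ciInf_ciSup (hbound : ∀ a b, |d a b| ≤ L * ‖a - b‖)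
    (hv : (𝓝[>] (0 : ℝ)).HasBasis p s) (hs : ∀ j, s j ⊆ Ioi 0) (x v : EuclideanSpace ℝ (Fin n)) :
    upperDerivate d x v = ⨅ j : Subtype p, ⨆ t : s j, sSup (ballQuotients d x v t) := by
  obtain ⟨j₀, hj₀⟩ := hv.ex_mem
  have : Nonempty (Subtype p) := ⟨⟨j₀, hj₀⟩⟩
  exact hv.limsup_eq_ciInf_ciSup_of_forall_bddAbove (fun j => nonempty_of_mem (hv.mem_of_mem j.2))
    fun j => ⟨L * ‖v‖, forall_mem_range.2 fun t => sSup_ballQuotients_le hbound (hs j t.2)⟩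

end Derivates

theorem derivates_measurable_general
    {n : ℕ} (L : ℝ) (hL : 0 < L)
    (d : EuclideanSpace ℝ (Fin n) → EuclideanSpace ℝ (Fin n) → ℝ)
    (htri : ∀ a b c, d a c ≤ d a b + d b c)
    (hLip : ∀ a b, d a b ≤ L * ‖a - b‖) :
    Measurable (fun p : EuclideanSpace ℝ (Fin n) × EuclideanSpace ℝ (Fin n) =>
        lowerDerivate d p.1 p.2) ∧
      Measurable (fun p : EuclideanSpace ℝ (Fin n) × EuclideanSpace ℝ (Fin n) =>
        upperDerivate d p.1 p.2) := by
  have hd := continuous_of_triangle hL.le htri hLip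
  have hbound := abs_le_mul_norm_sub_of_triangle htri hLip
  have hv := nhdsWithin_hasBasis (nhds_basis_ball_inv_nat_pos (x := (0 : ℝ))) (Ioi 0)
  have hpos (k : ℕ) : ball (0 : ℝ) (1 / k) ∩ Ioi 0 ⊆ Ioi 0 := inter_subset_right
  have hne (k : {k : ℕ // 0 < k}) : (ball (0 : ℝ) (1 / k) ∩ Ioi 0).Nonempty :=
    nonempty_of_mem (hv.mem_of_mem k.2)
  simp_rw [lowerDerivate_eq_ciSup_ciInf hbound hv hpos,
    upperDerivate_eq_ciInf_ciSup hbound hv hpos]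
  exact ⟨.iSup fun k => (upperSemicontinuous_iInf_sInf_ballQuotients hd hbound (hpos k)
      (hne k)).measurable,
    .iInf fun k => (lowerSemicontinuous_iSup_sSup_ballQuotients hd hbound (hpos k)
      (hne k)).measurable⟩

/-- For a pseudometric `d` on `ℝⁿ` that is `L`-Lipschitz with
respect to the Euclidean distance, the lower and upper derivates
`ρ̲, ρ̄ : ℝⁿ × ℝⁿ → ℝ` are Borel measurable functions. -/
theorem derivates_measurable
    {n : ℕ} (L : ℝ) (hL : 0 < L)
    (d : EuclideanSpace ℝ (Fin n) → EuclideanSpace ℝ (Fin n) → ℝ)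
    (hsymm : ∀ a b, d a b = d b a)
    (hdiag : ∀ a, d a a = 0)
    (htri : ∀ a b c, d a c ≤ d a b + d b c)
    (hLip : ∀ a b, d a b ≤ L * ‖a - b‖) :
    Measurable (fun p : EuclideanSpace ℝ (Fin n) × EuclideanSpace ℝ (Fin n) =>
        lowerDerivate d p.1 p.2) ∧
      Measurable (fun p : EuclideanSpace ℝ (Fin n) × EuclideanSpace ℝ (Fin n) =>
        upperDerivate d p.1 p.2) :=
  derivates_measurable_general L hL d htri hLip
end

section
/- Let (X, d_X) be a metric space, L ≥ 1, and f : ℝ³ → X an L-biLipschitz map with respect to ρ, i.e. (1/L)·ρ(a, b) ≤ d_X(f(a), f(b)) ≤ L·ρ(a, b) for all a, b ∈ ℝ³. Define γ₁(t) = f(t, 0, 0) and γ₂(t) = f((0, 1, 0)·(t, 0, 0)) = f(t, 1, −t/2). Then there exist constants 0 < C₁ ≤ C₂ and exponents 0 < α ≤ β < 1 (one may take α = β = 1/2) such that C₁·|t|^α ≤ d_X(γ₁(t), γ₂(t)) ≤ C₂·|t|^β for all |t| ≥ 1. -/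
/-!
Conjugating by the horizontal translation `(t, 0, 0)` moves the pair `(t, 0, 0), (t, 1, -t/2)` to
`(0, 0, 0), (0, 1, -t)`, and the dilation by `√|t|` writes `(0, 1, -t)` as the image of the point
`(0, 1/√|t|, -t/|t|)` of the compact set `{0} × [0, 1] × {-1, 1}`, which avoids the origin. Hence
`ρ((t, 0, 0), (t, 1, -t/2))` is `√|t|` times a number pinned between the positive minimum and the
maximum of `ρ((0, 0, 0), ·)` on that set, and the biLipschitz map distorts this by at most `L`.
-/

/-- The Heisenberg group product on `ℝ³`. -/
noncomputable def Hmul (a b : ℝ × ℝ × ℝ) : ℝ × ℝ × ℝ :=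
  (a.1 + b.1, a.2.1 + b.2.1, a.2.2 + b.2.2 + (a.1 * b.2.1 - a.2.1 * b.1) / 2)

/-- The Heisenberg dilations on `ℝ³`. -/
noncomputable def Hdil (t : ℝ) (a : ℝ × ℝ × ℝ) : ℝ × ℝ × ℝ :=
  (t * a.1, t * a.2.1, t ^ 2 * a.2.2)

open Set

lemma IsCompact.exists_pos_bounds {α : Type*} [TopologicalSpace α] {K : Set α}
    (hK : IsCompact K) (hne : K.Nonempty) {φ : α → ℝ} (hφ : ContinuousOn φ K)
    (hpos : ∀ p ∈ K, 0 < φ p) :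
    ∃ m M : ℝ, 0 < m ∧ m ≤ M ∧ ∀ p ∈ K, m ≤ φ p ∧ φ p ≤ M := by
  obtain ⟨pm, hpm, hmin⟩ := hK.exists_isMinOn hne hφ
  obtain ⟨pM, hpM, hmax⟩ := hK.exists_isMaxOn hne hφ
  exact ⟨φ pm, φ pM, hpos pm hpm, hmin hpM, fun p hp => ⟨hmin hp, hmax hp⟩⟩

lemma Hmul_neg_horizontal (t : ℝ) : Hmul (-t, 0, 0) (t, 0, 0) = (0, 0, 0) := by
  simp [Hmul]

lemma Hmul_neg_horizontal_translate (t : ℝ) :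
    Hmul (-t, 0, 0) (Hmul (0, 1, 0) (t, 0, 0)) = (0, 1, -t) := by
  simp only [Hmul, Prod.mk.injEq]
  refine ⟨by ring, by ring, by ring⟩

lemma Hdil_origin (s : ℝ) : Hdil s (0, 0, 0) = (0, 0, 0) := by
  simp [Hdil]

lemma Hdil_sqrt_abs {t : ℝ} (ht : t ≠ 0) :
    Hdil √|t| (0, 1 / √|t|, -t / |t|) = (0, 1, -t) := by
  have hs : 0 < √|t| := Real.sqrt_pos.2 (abs_pos.2 ht)
  simp only [Hdil, Real.sq_sqrt (abs_nonneg t), Prod.mk.injEq]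
  refine ⟨mul_zero _, by field_simp, by field_simp⟩

section

variable {ρ : ℝ × ℝ × ℝ → ℝ × ℝ × ℝ → ℝ}

lemma dist_horizontal_translate_eq (hleft : ∀ g a b, ρ (Hmul g a) (Hmul g b) = ρ a b) (t : ℝ) :
    ρ (t, 0, 0) (Hmul (0, 1, 0) (t, 0, 0)) = ρ (0, 0, 0) (0, 1, -t) := by
  rw [← hleft (-t, 0, 0), Hmul_neg_horizontal, Hmul_neg_horizontal_translate]

lemma dist_origin_central_eq
    (hhom : ∀ t : ℝ, 0 < t → ∀ a b, ρ (Hdil t a) (Hdil t b) = t * ρ a b) {t : ℝ} (ht : t ≠ 0) :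
    ρ (0, 0, 0) (0, 1, -t) = √|t| * ρ (0, 0, 0) (0, 1 / √|t|, -t / |t|) := by
  rw [← hhom _ (Real.sqrt_pos.2 (abs_pos.2 ht)), Hdil_origin, Hdil_sqrt_abs ht]

lemma exists_bounds_dist_horizontal_translate (hpos : ∀ a b, a ≠ b → 0 < ρ a b)
    (hleft : ∀ g a b, ρ (Hmul g a) (Hmul g b) = ρ a b)
    (hhom : ∀ t : ℝ, 0 < t → ∀ a b, ρ (Hdil t a) (Hdil t b) = t * ρ a b)
    (hcont : Continuous (fun p : (ℝ × ℝ × ℝ) × (ℝ × ℝ × ℝ) => ρ p.1 p.2)) :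
    ∃ m M : ℝ, 0 < m ∧ m ≤ M ∧ ∀ t : ℝ, 1 ≤ |t| →
      m * √|t| ≤ ρ (t, 0, 0) (Hmul (0, 1, 0) (t, 0, 0)) ∧
        ρ (t, 0, 0) (Hmul (0, 1, 0) (t, 0, 0)) ≤ M * √|t| := by
  set K : Set (ℝ × ℝ) := Icc 0 1 ×ˢ {-1, 1}
  have hK : IsCompact K := isCompact_Icc.prod (toFinite _).isCompact
  have hne : K.Nonempty := ⟨(1, 1), by simp [K]⟩
  have hφ : Continuous fun p : ℝ × ℝ => ρ (0, 0, 0) (0, p.1, p.2) :=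
    hcont.comp (f := fun p : ℝ × ℝ => (((0, 0, 0), (0, p.1, p.2)) : (ℝ × ℝ × ℝ) × (ℝ × ℝ × ℝ)))
      (by fun_prop)
  have hφpos : ∀ p ∈ K, 0 < ρ (0, 0, 0) (0, p.1, p.2) := by
    rintro ⟨y, z⟩ ⟨-, hz⟩
    refine hpos _ _ fun h => ?_
    rcases hz with rfl | rfl <;> simp at h
  obtain ⟨m, M, hm, hmM, hbound⟩ := hK.exists_pos_bounds hne hφ.continuousOn hφpos
  refine ⟨m, M, hm, hmM, fun t ht => ?_⟩
  have ht0 : t ≠ 0 := abs_pos.1 (one_pos.trans_le ht)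
  have hs : 1 ≤ √|t| := Real.one_le_sqrt.2 ht
  have hmem : (1 / √|t|, -t / |t|) ∈ K := by
    refine ⟨⟨by positivity, (div_le_one (one_pos.trans_le hs)).2 hs⟩, ?_⟩
    rcases abs_cases t with ⟨h, -⟩ | ⟨h, -⟩ <;> rw [h] <;> field_simp <;> simp
  obtain ⟨hlo, hhi⟩ := hbound _ hmem
  rw [dist_horizontal_translate_eq hleft, dist_origin_central_eq hhom ht0]
  constructor <;> nlinarith

end

theorem heisenberg_biLipschitz_image_spread_general
    (ρ : ℝ × ℝ × ℝ → ℝ × ℝ × ℝ → ℝ)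
    (hpos : ∀ a b, a ≠ b → 0 < ρ a b)
    (hleft : ∀ g a b, ρ (Hmul g a) (Hmul g b) = ρ a b)
    (hhom : ∀ t : ℝ, 0 < t → ∀ a b, ρ (Hdil t a) (Hdil t b) = t * ρ a b)
    (hcont : Continuous (fun p : (ℝ × ℝ × ℝ) × (ℝ × ℝ × ℝ) => ρ p.1 p.2))
    {X : Type*} [MetricSpace X] (L : ℝ) (hL : 1 ≤ L) (f : ℝ × ℝ × ℝ → X)
    (hf : ∀ a b, (1 / L) * ρ a b ≤ dist (f a) (f b) ∧ dist (f a) (f b) ≤ L * ρ a b) :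
    ∃ C₁ C₂ α β : ℝ, 0 < C₁ ∧ C₁ ≤ C₂ ∧ 0 < α ∧ α ≤ β ∧ β < 1 ∧
      ∀ t : ℝ, 1 ≤ |t| →
        C₁ * |t| ^ α ≤ dist (f (t, 0, 0)) (f (Hmul (0, 1, 0) (t, 0, 0))) ∧
          dist (f (t, 0, 0)) (f (Hmul (0, 1, 0) (t, 0, 0))) ≤ C₂ * |t| ^ β := by
  obtain ⟨m, M, hm, hmM, hbound⟩ :=
    exists_bounds_dist_horizontal_translate hpos hleft hhom hcont
  have hL0 : 0 < L := one_pos.trans_le hL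
  refine ⟨m / L, L * M, 1 / 2, 1 / 2, by positivity, ?_, by norm_num, le_rfl, by norm_num,
    fun t ht => ?_⟩
  · calc m / L ≤ m := div_le_self hm.le hL
      _ ≤ M := hmM
      _ ≤ L * M := le_mul_of_one_le_left (hm.le.trans hmM) hL
  obtain ⟨hlo, hhi⟩ := hbound t ht
  obtain ⟨hflo, hfhi⟩ := hf (t, 0, 0) (Hmul (0, 1, 0) (t, 0, 0))
  rw [← Real.sqrt_eq_rpow]
  constructor
  · calc m / L * √|t| = 1 / L * (m * √|t|) := by ring
      _ ≤ _ := mul_le_mul_of_nonneg_left hlo (by positivity)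
      _ ≤ _ := hflo
  · calc _ ≤ L * _ := hfhi
      _ ≤ L * (M * √|t|) := mul_le_mul_of_nonneg_left hhi hL0.le
      _ = L * M * √|t| := by ring

/-- If `f : ℝ³ → X` is `L`-biLipschitz with respect to a
left-invariant, homogeneous, continuous metric `ρ` on the Heisenberg group,
then the images `γ₁(t) = f(t,0,0)` and `γ₂(t) = f(t,1,−t/2)` of the horizontal
line and its left translate by `(0,1,0)` satisfy
`C₁·|t|^α ≤ d_X(γ₁(t), γ₂(t)) ≤ C₂·|t|^β` for all `|t| ≥ 1`, with constants
`0 < C₁ ≤ C₂` and exponents `0 < α ≤ β < 1`. -/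
theorem heisenberg_biLipschitz_image_spread
    (ρ : ℝ × ℝ × ℝ → ℝ × ℝ × ℝ → ℝ)
    (hsymm : ∀ a b, ρ a b = ρ b a)
    (hzero : ∀ a, ρ a a = 0)
    (htri : ∀ a b c, ρ a c ≤ ρ a b + ρ b c)
    (hpos : ∀ a b, a ≠ b → 0 < ρ a b)
    (hleft : ∀ g a b, ρ (Hmul g a) (Hmul g b) = ρ a b)
    (hhom : ∀ t : ℝ, 0 < t → ∀ a b, ρ (Hdil t a) (Hdil t b) = t * ρ a b)
    (hcont : Continuous (fun p : (ℝ × ℝ × ℝ) × (ℝ × ℝ × ℝ) => ρ p.1 p.2))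
    {X : Type*} [MetricSpace X] (L : ℝ) (hL : 1 ≤ L) (f : ℝ × ℝ × ℝ → X)
    (hf : ∀ a b, (1 / L) * ρ a b ≤ dist (f a) (f b) ∧ dist (f a) (f b) ≤ L * ρ a b) :
    ∃ C₁ C₂ α β : ℝ, 0 < C₁ ∧ C₁ ≤ C₂ ∧ 0 < α ∧ α ≤ β ∧ β < 1 ∧
      ∀ t : ℝ, 1 ≤ |t| →
        C₁ * |t| ^ α ≤ dist (f (t, 0, 0)) (f (Hmul (0, 1, 0) (t, 0, 0))) ∧
          dist (f (t, 0, 0)) (f (Hmul (0, 1, 0) (t, 0, 0))) ≤ C₂ * |t| ^ β :=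
  heisenberg_biLipschitz_image_spread_general ρ hpos hleft hhom hcont L hL f hf
end

section
/- Let (X, d_X) be a metric space with the property that for any two geodesic lines γ, σ : ℝ → X the function t ↦ d_X(γ(t), σ(t)) is convex on ℝ (this holds in any CAT₀ space). Then there is no map f : ℝ³ → X which is biLipschitz with respect to ρ (i.e. (1/L)·ρ(a, b) ≤ d_X(f(a), f(b)) ≤ L·ρ(a, b) for some L ≥ 1 and all a, b) and such that both curves t ↦ f(t, 0, 0) and t ↦ f((0, 1, 0)·(t, 0, 0)) are geodesic lines in X. -/
/-- A geodesic line in a metric space: a curve `γ : ℝ → X` such that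
`d(γ(s), γ(t)) = c·|s − t|` for some constant `c > 0`. -/
def IsGeodesicLine {X : Type*} [MetricSpace X] (γ : ℝ → X) : Prop :=
  ∃ c : ℝ, 0 < c ∧ ∀ s t : ℝ, dist (γ s) (γ t) = c * |s - t|

/-!
At time `t` the Heisenberg distance between the lines `t ↦ (t,0,0)` and `t ↦ (0,1,0)·(t,0,0)` is
`ρ(0, (0,1,-t))`, which by left invariance, homogeneity and the triangle inequality stays within a
bounded amount of `√t · ρ(0, (0,0,-1))`. So the distance `D t` between their images in `X`, which
are geodesic lines, grows like `√t`. But `D` is convex, and a convex function that is `O(√t)` is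
bounded on `[1, ∞)`: convexity on `[0, t²]` gives `D t ≤ (1 - 1/t) D 0 + (1/t) D (t²) = O(1)`.
-/

open Set Filter

theorem ConvexOn.le_of_le_add_mul_sqrt {D : ℝ → ℝ} (hD : ConvexOn ℝ univ D) {A B : ℝ}
    (hDle : ∀ t ≥ 1, D t ≤ A + B * √t) {t : ℝ} (ht : 1 ≤ t) : D t ≤ |D 0| + |A| + B := by
  have ht0 : 0 < t := zero_lt_one.trans_le ht
  have hweight : t⁻¹ ≤ 1 := inv_le_one_of_one_le₀ ht
  have hconv := hD.2 (mem_univ 0) (mem_univ (t ^ 2)) (sub_nonneg.2 hweight)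
    (inv_nonneg.2 ht0.le) (sub_add_cancel 1 t⁻¹)
  have hmid : (1 - t⁻¹) • (0 : ℝ) + t⁻¹ • t ^ 2 = t := by
    rw [smul_zero, zero_add, smul_eq_mul]
    field_simp
  rw [hmid, smul_eq_mul, smul_eq_mul] at hconv
  have hfar : D (t ^ 2) ≤ A + B * t := by
    simpa only [Real.sqrt_sq ht0.le] using hDle (t ^ 2) (one_le_pow₀ ht)
  have hnear : (1 - t⁻¹) * D 0 ≤ |D 0| :=
    calc (1 - t⁻¹) * D 0 ≤ (1 - t⁻¹) * |D 0| :=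
          mul_le_mul_of_nonneg_left (le_abs_self _) (sub_nonneg.2 hweight)
      _ ≤ |D 0| := mul_le_of_le_one_left (abs_nonneg _) (by linarith [inv_nonneg.2 ht0.le])
  have hA : A * t⁻¹ ≤ |A| := by
    calc A * t⁻¹ ≤ |A| * t⁻¹ := by gcongr; exact le_abs_self A
      _ ≤ |A| := mul_le_of_le_one_right (abs_nonneg A) hweight
  calc D t ≤ (1 - t⁻¹) * D 0 + t⁻¹ * D (t ^ 2) := hconv
    _ ≤ |D 0| + t⁻¹ * (A + B * t) := by gcongr
    _ = |D 0| + A * t⁻¹ + B := by field_simp; ring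
    _ ≤ |D 0| + |A| + B := by linarith

section HeisenbergMetric

variable {ρ : ℝ × ℝ × ℝ → ℝ × ℝ × ℝ → ℝ}

theorem rho_eq_rho_zero_Hmul_neg (hleft : ∀ g a b, ρ (Hmul g a) (Hmul g b) = ρ a b)
    (a b : ℝ × ℝ × ℝ) : ρ a b = ρ 0 (Hmul (-a) b) := by
  have hinv : Hmul (-a) a = 0 := by
    ext <;> simp [Hmul]; ring
  rw [← hleft (-a) a b, hinv]

theorem rho_zero_center_eq (hhom : ∀ t : ℝ, 0 < t → ∀ a b, ρ (Hdil t a) (Hdil t b) = t * ρ a b)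
    {t : ℝ} (ht : 0 < t) : ρ 0 (0, 0, -t) = √t * ρ 0 (0, 0, -1) := by
  have h := hhom √t (Real.sqrt_pos.2 ht) 0 (0, 0, -1)
  simpa [Hdil, Real.sq_sqrt ht.le, Prod.mk_zero_zero] using h

theorem rho_parallel_lines_eq (hleft : ∀ g a b, ρ (Hmul g a) (Hmul g b) = ρ a b) (t : ℝ) :
    ρ (t, 0, 0) (Hmul (0, 1, 0) (t, 0, 0)) = ρ 0 (0, 1, -t) := by
  rw [rho_eq_rho_zero_Hmul_neg hleft]
  congr 1
  ext <;> simp [Hmul]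

theorem rho_zero_le_add_sqrt_mul (hleft : ∀ g a b, ρ (Hmul g a) (Hmul g b) = ρ a b)
    (htri : ∀ a b c, ρ a c ≤ ρ a b + ρ b c)
    (hhom : ∀ t : ℝ, 0 < t → ∀ a b, ρ (Hdil t a) (Hdil t b) = t * ρ a b) {t : ℝ} (ht : 0 < t) :
    ρ 0 (0, 1, -t) ≤ ρ 0 (0, 1, 0) + √t * ρ 0 (0, 0, -1) := by
  have htrans : ρ (0, 1, 0) (0, 1, -t) = ρ 0 (0, 0, -t) := by
    rw [rho_eq_rho_zero_Hmul_neg hleft]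
    congr 1
    simp [Hmul]
  calc ρ 0 (0, 1, -t) ≤ ρ 0 (0, 1, 0) + ρ (0, 1, 0) (0, 1, -t) := htri _ _ _
    _ = ρ 0 (0, 1, 0) + √t * ρ 0 (0, 0, -1) := by rw [htrans, rho_zero_center_eq hhom ht]

theorem sqrt_mul_le_rho_zero_add (hleft : ∀ g a b, ρ (Hmul g a) (Hmul g b) = ρ a b)
    (htri : ∀ a b c, ρ a c ≤ ρ a b + ρ b c)
    (hhom : ∀ t : ℝ, 0 < t → ∀ a b, ρ (Hdil t a) (Hdil t b) = t * ρ a b) {t : ℝ} (ht : 0 < t) :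
    √t * ρ 0 (0, 0, -1) ≤ ρ 0 (0, 1, -t) + ρ 0 (0, -1, 0) := by
  have htrans : ρ (0, 1, -t) (0, 0, -t) = ρ 0 (0, -1, 0) := by
    rw [rho_eq_rho_zero_Hmul_neg hleft]
    congr 1
    simp [Hmul]
  calc √t * ρ 0 (0, 0, -1) = ρ 0 (0, 0, -t) := (rho_zero_center_eq hhom ht).symm
    _ ≤ ρ 0 (0, 1, -t) + ρ (0, 1, -t) (0, 0, -t) := htri _ _ _
    _ = ρ 0 (0, 1, -t) + ρ 0 (0, -1, 0) := by rw [htrans]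

end HeisenbergMetric

theorem no_biLipschitz_heisenberg_into_convex_distance_space_general
    (ρ : ℝ × ℝ × ℝ → ℝ × ℝ × ℝ → ℝ)
    (htri : ∀ a b c, ρ a c ≤ ρ a b + ρ b c)
    (hpos : ∀ a b, a ≠ b → 0 < ρ a b)
    (hleft : ∀ g a b, ρ (Hmul g a) (Hmul g b) = ρ a b)
    (hhom : ∀ t : ℝ, 0 < t → ∀ a b, ρ (Hdil t a) (Hdil t b) = t * ρ a b)
    {X : Type*} [MetricSpace X]
    (hconv : ∀ γ σ : ℝ → X, IsGeodesicLine γ → IsGeodesicLine σ →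
      ConvexOn ℝ Set.univ (fun t => dist (γ t) (σ t))) :
    ¬ ∃ (L : ℝ) (f : ℝ × ℝ × ℝ → X), 1 ≤ L ∧
        (∀ a b, (1 / L) * ρ a b ≤ dist (f a) (f b) ∧ dist (f a) (f b) ≤ L * ρ a b) ∧
        IsGeodesicLine (fun t : ℝ => f (t, 0, 0)) ∧
        IsGeodesicLine (fun t : ℝ => f (Hmul (0, 1, 0) (t, 0, 0))) := by
  rintro ⟨L, f, hL, hbil, hγ, hσ⟩
  have hL0 : 0 < L := zero_lt_one.trans_le hL
  set D := fun t : ℝ => dist (f (t, 0, 0)) (f (Hmul (0, 1, 0) (t, 0, 0)))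
  have hc : 0 < ρ 0 (0, 0, -1) := hpos _ _ (by simp [Prod.ext_iff])
  have hbdd : ∀ t ≥ 1, D t ≤ |D 0| + |L * ρ 0 (0, 1, 0)| + L * ρ 0 (0, 0, -1) := by
    refine fun t ht ↦ (hconv _ _ hγ hσ).le_of_le_add_mul_sqrt (fun s hs ↦ ?_) ht
    calc D s ≤ L * ρ 0 (0, 1, -s) := rho_parallel_lines_eq hleft s ▸ (hbil _ _).2
      _ ≤ L * (ρ 0 (0, 1, 0) + √s * ρ 0 (0, 0, -1)) := by
        gcongr; exact rho_zero_le_add_sqrt_mul hleft htri hhom (by linarith)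
      _ = L * ρ 0 (0, 1, 0) + L * ρ 0 (0, 0, -1) * √s := by ring
  have hgrow : ∀ t ≥ 1, √t * ρ 0 (0, 0, -1) ≤ L * D t + ρ 0 (0, -1, 0) := by
    intro t ht
    have hlow : ρ 0 (0, 1, -t) ≤ L * D t := by
      rw [← div_le_iff₀' hL0, ← one_div_mul_eq_div, ← rho_parallel_lines_eq hleft t]
      exact (hbil _ _).1
    linarith [sqrt_mul_le_rho_zero_add hleft htri hhom (t := t) (by linarith)]
  obtain ⟨t, ht, hlarge⟩ := ((eventually_ge_atTop 1).and
    ((Real.tendsto_sqrt_atTop.atTop_mul_const hc).eventually_gt_atTop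
      (L * (|D 0| + |L * ρ 0 (0, 1, 0)| + L * ρ 0 (0, 0, -1)) + ρ 0 (0, -1, 0)))).exists
  linarith [hgrow t ht, mul_le_mul_of_nonneg_left (hbdd t ht) hL0.le]

/-- Let `X` be a metric space in which the distance between any
two geodesic lines is a convex function of the parameter (as in a CAT(0)
space).  Then there is no map `f : ℝ³ → X` that is biLipschitz with respect to
a left-invariant, homogeneous, continuous metric `ρ` on the Heisenberg group
and sends both `t ↦ (t,0,0)` and `t ↦ (0,1,0)·(t,0,0)` to geodesic lines. -/
theorem no_biLipschitz_heisenberg_into_convex_distance_space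
    (ρ : ℝ × ℝ × ℝ → ℝ × ℝ × ℝ → ℝ)
    (hsymm : ∀ a b, ρ a b = ρ b a)
    (hzero : ∀ a, ρ a a = 0)
    (htri : ∀ a b c, ρ a c ≤ ρ a b + ρ b c)
    (hpos : ∀ a b, a ≠ b → 0 < ρ a b)
    (hleft : ∀ g a b, ρ (Hmul g a) (Hmul g b) = ρ a b)
    (hhom : ∀ t : ℝ, 0 < t → ∀ a b, ρ (Hdil t a) (Hdil t b) = t * ρ a b)
    (hcont : Continuous (fun p : (ℝ × ℝ × ℝ) × (ℝ × ℝ × ℝ) => ρ p.1 p.2))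
    {X : Type*} [MetricSpace X]
    (hconv : ∀ γ σ : ℝ → X, IsGeodesicLine γ → IsGeodesicLine σ →
      ConvexOn ℝ Set.univ (fun t => dist (γ t) (σ t))) :
    ¬ ∃ (L : ℝ) (f : ℝ × ℝ × ℝ → X), 1 ≤ L ∧
        (∀ a b, (1 / L) * ρ a b ≤ dist (f a) (f b) ∧ dist (f a) (f b) ≤ L * ρ a b) ∧
        IsGeodesicLine (fun t : ℝ => f (t, 0, 0)) ∧
        IsGeodesicLine (fun t : ℝ => f (Hmul (0, 1, 0) (t, 0, 0))) :=
  no_biLipschitz_heisenberg_into_convex_distance_space_general ρ htri hpos hleft hhom hconv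
end
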